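/- Let P be a prime, D a natural number, and r : ZMod P → ℝ. Define the discrete ridgelet matrix R indexed by rows (a,b) ∈ (ZMod P)^D × ZMod P and columns x ∈ (ZMod P)^D by R[(a,b), x] = P^{-D/2} r(a·x − b), where a·x = Σ_i a_i x_i in ZMod P. If Σ_b r(b) = 0, Σ_b r(b)² = 1, and the admissibility constant C_{r,r} = Σ_v F₁[r](v) conj(F₁[r](v)) equals 1 (where F₁ is the one-dimensional discrete Fourier transform over ZMod P), then R^T R = I, i.e., R is an isometry. -/

import Mathlib

/-!
Entry `(x, y)` of `Rᵀ R` is `P^{-D} ∑_a ρ (a ⬝ᵥ (y - x))`, where `ρ` is the autocorrelation of `r`.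
On the diagonal this is `P^{-D} · P^D · ∑ r² = 1`. Off the diagonal `a ↦ a ⬝ᵥ (y - x)` is a nonzero
linear form, so the sum does not change when the argument of `ρ` is translated; averaging over all
translates makes it a multiple of `∑_t ρ t = (∑ r)² = 0`.
-/

open Complex in
/-- One-dimensional discrete Fourier transform over `ZMod P` of a real function. -/
noncomputable def F1 (P : ℕ) [NeZero P] (r : ZMod P → ℝ) (v : ZMod P) : ℂ :=
  ((P : ℝ) ^ (-(1 : ℝ) / 2) : ℝ) *
    ∑ b : ZMod P, (r b : ℂ) *
      Complex.exp (-(2 * Real.pi * Complex.I) * (v.val : ℂ) * (b.val : ℂ) / (P : ℂ))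

open Matrix

section Autocorrelation

variable {G S : Type*} [AddCommGroup G] [Fintype G] [CommSemiring S]

def autocorrelation (r : G → S) (t : G) : S := ∑ b, r b * r (b + t)

lemma autocorrelation_zero (r : G → S) : autocorrelation r 0 = ∑ b, r b ^ 2 := by
  simp [autocorrelation, sq]

lemma sum_autocorrelation (r : G → S) : ∑ t, autocorrelation r t = (∑ b, r b) ^ 2 := by
  rw [sq, Finset.sum_mul]
  unfold autocorrelation
  rw [Finset.sum_comm]
  refine Finset.sum_congr rfl fun b _ => ?_
  rw [← Finset.mul_sum]
  exact congrArg (r b * ·) (Equiv.sum_comp (Equiv.addLeft b) r)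

lemma sum_mul_sub_eq_autocorrelation (r : G → S) (u v : G) :
    ∑ b, r (u - b) * r (v - b) = autocorrelation r (v - u) :=
  Fintype.sum_equiv (Equiv.subLeft u) _ _ fun b => by
    simp only [Equiv.subLeft_apply]
    congr 2
    abel

end Autocorrelation

section DotProduct

variable {ι K M : Type*} [Fintype ι] [DecidableEq ι] [Field K] [Fintype K] [AddCommMonoid M]

lemma sum_comp_dotProduct_add (f : K → M) {w : ι → K} (hw : w ≠ 0) (s : K) :
    ∑ a, f (a ⬝ᵥ w + s) = ∑ a, f (a ⬝ᵥ w) := by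
  obtain ⟨i, hi⟩ := Function.ne_iff.mp hw
  refine Fintype.sum_equiv (Equiv.addRight (Pi.single i (s / w i))) _ _ fun a => ?_
  rw [Equiv.coe_addRight, add_dotProduct, single_dotProduct, div_mul_cancel₀ s hi]

lemma sum_comp_dotProduct_eq_zero [IsAddTorsionFree M] {f : K → M} (hf : ∑ t, f t = 0)
    {w : ι → K} (hw : w ≠ 0) : ∑ a, f (a ⬝ᵥ w) = 0 := by
  have hcard : Fintype.card K • ∑ a : ι → K, f (a ⬝ᵥ w) = 0 := calc
    _ = ∑ s : K, ∑ a : ι → K, f (a ⬝ᵥ w + s) := by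
      simp only [sum_comp_dotProduct_add f hw, Finset.sum_const, Finset.card_univ]
    _ = ∑ a : ι → K, ∑ s, f (a ⬝ᵥ w + s) := Finset.sum_comm
    _ = 0 := Finset.sum_eq_zero fun a _ => (Equiv.sum_comp (Equiv.addLeft _) f).trans hf
  exact (nsmul_eq_zero_iff_right Fintype.card_ne_zero).mp hcard

end DotProduct

lemma transpose_mul_apply_of_ridgelet {ι K S : Type*} [Fintype ι] [DecidableEq ι] [CommRing K]
    [Fintype K] [CommSemiring S] (r : K → S) (c : S) (R : Matrix ((ι → K) × K) (ι → K) S)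
    (hR : ∀ ab x, R ab x = c * r (ab.1 ⬝ᵥ x - ab.2)) (x y : ι → K) :
    (Rᵀ * R) x y = c ^ 2 * ∑ a : ι → K, autocorrelation r (a ⬝ᵥ (y - x)) := by
  simp only [mul_apply, transpose_apply, hR, Fintype.sum_prod_type, dotProduct_sub,
    ← sum_mul_sub_eq_autocorrelation, Finset.mul_sum]
  refine Finset.sum_congr rfl fun a _ => Finset.sum_congr rfl fun b _ => ?_
  ring

lemma rpow_neg_half_sq_mul_pow {x : ℝ} (hx : 0 < x) (n : ℕ) :
    (x ^ (-(n : ℝ) / 2)) ^ 2 * x ^ n = 1 := by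
  rw [← Real.rpow_natCast _ 2, ← Real.rpow_mul hx.le, ← Real.rpow_natCast x n,
    ← Real.rpow_add hx]
  norm_num

theorem stmt4_general (P : ℕ) [Fact (Nat.Prime P)] (D : ℕ) (r : ZMod P → ℝ)
    (hzero : ∑ b : ZMod P, r b = 0)
    (hnorm : ∑ b : ZMod P, (r b) ^ 2 = 1)
    (R : Matrix ((Fin D → ZMod P) × ZMod P) (Fin D → ZMod P) ℝ)
    (hRdef : ∀ (ab : (Fin D → ZMod P) × ZMod P) (x : Fin D → ZMod P),
      R ab x = (P : ℝ) ^ (-(D : ℝ) / 2) * r ((∑ i, ab.1 i * x i) - ab.2)) :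
    R.transpose * R = 1 := by
  have hP : (0 : ℝ) < P := by exact_mod_cast (Fact.out : P.Prime).pos
  ext x y
  rw [transpose_mul_apply_of_ridgelet r _ R hRdef, one_apply]
  split_ifs with hxy
  · subst hxy
    simp [autocorrelation_zero, hnorm, rpow_neg_half_sq_mul_pow hP]
  · rw [sum_comp_dotProduct_eq_zero (by rw [sum_autocorrelation, hzero, sq, mul_zero])
      (sub_ne_zero.mpr (Ne.symm hxy)), mul_zero]

theorem stmt4 (P : ℕ) [Fact (Nat.Prime P)] (D : ℕ) (r : ZMod P → ℝ)
    (hzero : ∑ b : ZMod P, r b = 0)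
    (hnorm : ∑ b : ZMod P, (r b) ^ 2 = 1)
    (hadm : ∑ v : ZMod P, F1 P r v * (starRingEnd ℂ) (F1 P r v) = 1)
    (R : Matrix ((Fin D → ZMod P) × ZMod P) (Fin D → ZMod P) ℝ)
    (hRdef : ∀ (ab : (Fin D → ZMod P) × ZMod P) (x : Fin D → ZMod P),
      R ab x = (P : ℝ) ^ (-(D : ℝ) / 2) * r ((∑ i, ab.1 i * x i) - ab.2)) :
    R.transpose * R = 1 :=
  stmt4_general P D r hzero hnorm R hRdef
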